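/- arXiv:2303.01182 — 2 statements merged into one kernel-verified Lean document; each statement's English description precedes it below -/
import Mathlib

section
/- Let V be a Banach space of dimension at least 𝔠 and W a closed linear subspace of V. Suppose V \ W is ℵ₀-lineable and W contains a regular basic sequence. Then for every n ∈ ℕ, V \ W is (n, 𝔠)-spaceable: for every n-dimensional subspace Z with Z \ {0} ⊆ V \ W, there is a closed subspace F of V with dim F = 𝔠, Z ⊆ F, and F ∩ W = {0}. -/
/-!
Let `U = W ⊔ Z`, closed because `Z` is finite-dimensional. Since `E ∩ W = 0`, `E ∩ U` is
finite-dimensional, so the infinite-dimensional `E` forces `V ⧸ U` to be infinite-dimensional.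
A biorthogonal system of `V ⧸ U` lifts to vectors `g j` and functionals `φ j` vanishing on `U`
with `φ i (g j) = δ i j`, and the `g j` can be taken as small as we like. Adding them to the
regular basic sequence `y` of `W` gives a basic sequence `h j = y j + g j`, still biorthogonal to
`φ`; as its partial-sum projections are uniformly bounded, a vector of `G = closure (span h)`
on which every `φ j` vanishes is `0`, so `G ∩ U = 0`. Then `F = Z ⊔ G` is closed, meets `W`
only in `0`, is separable and hence has at most `𝔠` elements, and contains the independent
vectors `∑ j, t ^ j / (1 + ‖h j‖) • h j` for `0 < t < 1`.
-/

/-- `u` is a basic sequence: all `u k` are nonzero and there is a constant `C` with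
`‖∑_{k<s} λ k • u k‖ ≤ C * ‖∑_{k<r} λ k • u k‖` for `s ≤ r`. -/
def IsBasicSeq {V : Type*} [NormedAddCommGroup V] [NormedSpace ℝ V] (u : ℕ → V) : Prop :=
  (∀ k, u k ≠ 0) ∧ ∃ C : ℝ, ∀ s r : ℕ, s ≤ r → ∀ lam : ℕ → ℝ,
    ‖∑ k ∈ Finset.range s, lam k • u k‖ ≤ C * ‖∑ k ∈ Finset.range r, lam k • u k‖

open Cardinal Filter Set Submodule Topology TopologicalSpace

section LinearAlgebra

variable {K M : Type*} [DivisionRing K] [AddCommGroup M] [Module K M]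

lemma Submodule.finiteDimensional_inf_sup_of_disjoint {E W Z : Submodule K M} (hEW : Disjoint E W)
    [FiniteDimensional K Z] : FiniteDimensional K ↥(E ⊓ (W ⊔ Z)) := by
  let f : ↥(E ⊓ (W ⊔ Z)) →ₗ[K] ↥(Z.map W.mkQ) :=
    (W.mkQ ∘ₗ (E ⊓ (W ⊔ Z)).subtype).codRestrict _ fun x => by
      obtain ⟨w, hw, z, hz, hwz⟩ := mem_sup.mp x.2.2
      refine ⟨z, hz, ?_⟩
      simp [← hwz, (Quotient.mk_eq_zero W).2 hw]
  refine Module.Finite.of_injective f fun a b hab => ?_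
  have hab' : (a : M) - b ∈ W := (Quotient.eq W).mp (congrArg Subtype.val hab)
  exact Subtype.ext (sub_eq_zero.mp (disjoint_def.mp hEW _ (sub_mem a.2.1 b.2.1) hab'))

lemma Submodule.finiteDimensional_of_map_mkQ {E : Submodule K M} (U : Submodule K M)
    [FiniteDimensional K ↥(E ⊓ U)] [FiniteDimensional K ↥(E.map U.mkQ)] : FiniteDimensional K E := by
  let L := U.mkQ.domRestrict E
  have : (LinearMap.ker L).CoFG := range_fg_iff_ker_cofg.mp <| by
    rw [LinearMap.range_domRestrict]
    exact Module.Finite.iff_fg.mp inferInstance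
  have : FiniteDimensional K (LinearMap.ker L) := by
    have hker : LinearMap.ker L = comap E.subtype (E ⊓ U) := by
      rw [LinearMap.ker_domRestrict, ker_mkQ, comap_inf, comap_subtype_self, top_inf_eq]
    rw [hker]
    exact (comapSubtypeEquivOfLe inf_le_left).symm.finiteDimensional
  exact Module.Finite.of_submodule_quotient (LinearMap.ker L)

lemma exists_forall_eq_zero_notMem_span {ι : Type*} [Finite ι] (hM : ¬ FiniteDimensional K M)
    (φ : ι → Module.Dual K M) {S : Set M} (hS : S.Finite) :
    ∃ x, (∀ i, φ i x = 0) ∧ x ∉ span K S := by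
  by_contra! H
  let Λ := LinearMap.pi φ
  have : FiniteDimensional K (span K S) := FiniteDimensional.span_of_finite K hS
  have : FiniteDimensional K (LinearMap.ker Λ) :=
    finiteDimensional_of_le fun x hx => H x fun i => congrFun (LinearMap.mem_ker.mp hx) i
  have : (LinearMap.ker Λ).CoFG := CoFG.ker Λ
  exact hM (Module.Finite.of_submodule_quotient (LinearMap.ker Λ))

end LinearAlgebra

lemma linearIndependent_fun_pow (K : Type*) [CommRing K] [IsDomain K] :
    LinearIndependent K (fun (t : K) (n : ℕ) => t ^ n) := by
  refine LinearIndependent.of_comp (LinearMap.funLeft K K Multiplicative.toAdd) ?_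
  convert (linearIndependent_monoidHom (Multiplicative ℕ) K).comp (powersHom K)
    (powersHom K).injective using 1
  ext t m
  simp [LinearMap.funLeft]

lemma TopologicalSpace.IsSeparable.mk_le_continuum {X : Type*} [TopologicalSpace X]
    [FrechetUrysohnSpace X] [T2Space X] {s : Set X} (hs : IsSeparable s) : #s ≤ 𝔠 := by
  obtain ⟨c, hc, hsc⟩ := hs
  have hseq : ∀ x : closure c, ∃ u : ℕ → c, Tendsto (fun n => (u n : X)) atTop (𝓝 x) := by
    rintro ⟨x, hx⟩
    obtain ⟨u, huc, hu⟩ := mem_closure_iff_seq_limit.mp hx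
    exact ⟨fun n => ⟨u n, huc n⟩, hu⟩
  choose u hu using hseq
  have hinj : Function.Injective u := fun x y hxy =>
    Subtype.ext (tendsto_nhds_unique (hu x) (by rw [hxy]; exact hu y))
  have : Countable c := hc.to_subtype
  calc #s ≤ #(closure c) := mk_le_mk_of_subset hsc
    _ ≤ #(ℕ → c) := mk_le_of_injective hinj
    _ ≤ 𝔠 := by
      rw [mk_arrow, mk_nat, lift_aleph0, ← aleph0_power_aleph0]
      exact power_le_power_right (lift_le_aleph0.mpr mk_le_aleph0)

section Biorthogonal

variable {𝕜 X : Type*} [RCLike 𝕜] [NormedAddCommGroup X] [NormedSpace 𝕜 X]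

def IsBiorthogonal (x : ℕ → X) (f : ℕ → StrongDual 𝕜 X) : Prop :=
  ∀ i j, f i (x j) = if i = j then 1 else 0

lemma Submodule.exists_dual_eq_one_of_notMem {p : Submodule 𝕜 X} (hp : IsClosed (p : Set X))
    {x : X} (hx : x ∉ p) : ∃ f : StrongDual 𝕜 X, f x = 1 ∧ ∀ y ∈ p, f y = 0 := by
  have : IsClosed (p : Set X) := hp
  obtain ⟨f, hf⟩ := SeparatingDual.exists_eq_one (R := 𝕜) (x := p.mkQ x)
    (by simpa [Quotient.mk_eq_zero] using hx)
  exact ⟨f.comp p.mkQL, hf, fun y hy => by simp [(Quotient.mk_eq_zero p).2 hy]⟩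

lemma exists_isBiorthogonal (hX : ¬ FiniteDimensional 𝕜 X) :
    ∃ (x : ℕ → X) (f : ℕ → StrongDual 𝕜 X), IsBiorthogonal x f := by
  classical
  obtain ⟨p, hp1, hp0⟩ := exists_seq_of_forall_finset_exists
    (fun p : X × StrongDual 𝕜 X => p.2 p.1 = 1) (fun p q => p.2 q.1 = 0 ∧ q.2 p.1 = 0)
    fun s _ => by
      obtain ⟨x, hxs, hx⟩ := exists_forall_eq_zero_notMem_span hX
        (fun q : s => (q.1.2 : Module.Dual 𝕜 X)) (s.finite_toSet.image Prod.fst)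
      have : FiniteDimensional 𝕜 (span 𝕜 (Prod.fst '' (s : Set (X × StrongDual 𝕜 X)))) :=
        FiniteDimensional.span_of_finite 𝕜 (s.finite_toSet.image Prod.fst)
      obtain ⟨f, hfx, hf⟩ := exists_dual_eq_one_of_notMem (closed_of_finiteDimensional _) hx
      exact ⟨(x, f), hfx, fun q hq => ⟨hxs ⟨q, hq⟩, hf _ (subset_span ⟨q, hq, rfl⟩)⟩⟩
  refine ⟨fun n => (p n).1, fun n => (p n).2, fun i j => ?_⟩
  rcases lt_trichotomy i j with hij | rfl | hij
  · simp [hij.ne, (hp0 i j hij).1]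
  · simp [hp1]
  · simp [hij.ne', (hp0 j i hij).2]

lemma IsBiorthogonal.smul {x : ℕ → X} {f : ℕ → StrongDual 𝕜 X} (h : IsBiorthogonal x f)
    {c : ℕ → 𝕜} (hc : ∀ j, c j ≠ 0) :
    IsBiorthogonal (fun j => c j • x j) (fun i => (c i)⁻¹ • f i) := by
  intro i j
  rcases eq_or_ne i j with rfl | hij
  · simp [h i i, hc i]
  · simp [h i j, hij]

lemma Submodule.exists_isBiorthogonal_of_not_finiteDimensional_quotient {V : Type*}
    [NormedAddCommGroup V] [NormedSpace 𝕜 V] {U : Submodule 𝕜 V} (hU : IsClosed (U : Set V))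
    (hV : ¬ FiniteDimensional 𝕜 (V ⧸ U)) {δ : ℕ → ℝ} (hδ : ∀ j, 0 < δ j) :
    ∃ (g : ℕ → V) (φ : ℕ → StrongDual 𝕜 V), IsBiorthogonal g φ ∧ (∀ j, ‖g j‖ ≤ δ j) ∧
      ∀ i, ∀ w ∈ U, φ i w = 0 := by
  have : IsClosed (U : Set V) := hU
  obtain ⟨x, f, hxf⟩ := exists_isBiorthogonal hV
  choose g hgx using fun j => Quotient.mk_surjective U (x j)
  have hgφ : IsBiorthogonal g fun i => (f i).comp U.mkQL := fun i j => by
    simpa [hgx j] using hxf i j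
  have hg0 : ∀ j, ‖g j‖ ≠ 0 := fun j hj => by
    simpa [norm_eq_zero.mp hj] using hgφ j j
  have hc : ∀ j, ((δ j / ‖g j‖ : ℝ) : 𝕜) ≠ 0 := fun j => by
    simpa using ⟨(hδ j).ne', norm_ne_zero_iff.mp (hg0 j)⟩
  refine ⟨_, _, hgφ.smul hc, fun j => ?_, fun i w hw => ?_⟩
  · rw [norm_smul, RCLike.norm_ofReal, abs_div, abs_norm, abs_of_pos (hδ j),
      div_mul_cancel₀ _ (hg0 j)]
  · simp [(Quotient.mk_eq_zero U).2 hw]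

end Biorthogonal

section BasicSequence

variable {V : Type*} [NormedAddCommGroup V] [NormedSpace ℝ V]

def IsBasicWithConstant (u : ℕ → V) (C : ℝ) : Prop :=
  ∀ s r : ℕ, s ≤ r → ∀ lam : ℕ → ℝ,
    ‖∑ k ∈ Finset.range s, lam k • u k‖ ≤ C * ‖∑ k ∈ Finset.range r, lam k • u k‖

namespace IsBasicWithConstant

variable {u d : ℕ → V} {C : ℝ}

lemma mono (hu : IsBasicWithConstant u C) {D : ℝ} (hCD : C ≤ D) : IsBasicWithConstant u D :=
  fun s r hsr lam => (hu s r hsr lam).trans (mul_le_mul_of_nonneg_right hCD (norm_nonneg _))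

lemma abs_mul_norm_le (hu : IsBasicWithConstant u C) (lam : ℕ → ℝ) {k r : ℕ} (hkr : k < r) :
    |lam k| * ‖u k‖ ≤ 2 * C * ‖∑ i ∈ Finset.range r, lam i • u i‖ := by
  have hdiff : lam k • u k =
      ∑ i ∈ Finset.range (k + 1), lam i • u i - ∑ i ∈ Finset.range k, lam i • u i := by
    rw [Finset.sum_range_succ, add_sub_cancel_left]
  calc |lam k| * ‖u k‖ = ‖lam k • u k‖ := by rw [norm_smul, Real.norm_eq_abs]
    _ ≤ ‖∑ i ∈ Finset.range (k + 1), lam i • u i‖ + ‖∑ i ∈ Finset.range k, lam i • u i‖ :=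
      hdiff ▸ norm_sub_le _ _
    _ ≤ C * ‖∑ i ∈ Finset.range r, lam i • u i‖ + C * ‖∑ i ∈ Finset.range r, lam i • u i‖ :=
      add_le_add (hu _ _ hkr lam) (hu _ _ hkr.le lam)
    _ = 2 * C * ‖∑ i ∈ Finset.range r, lam i • u i‖ := by ring

lemma add_of_norm_le (hu : IsBasicWithConstant u C) (hC : 0 < C) {L : ℝ} (huL : ∀ k, L ≤ ‖u k‖)
    (hd : ∀ k, ‖d k‖ ≤ L / (8 * C) * (1 / 2) ^ k) :
    IsBasicWithConstant (fun k => u k + d k) (2 * C + 1) := by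
  intro s r hsr lam
  set S : ℕ → V := fun t => ∑ k ∈ Finset.range t, lam k • u k
  set D : ℕ → V := fun t => ∑ k ∈ Finset.range t, lam k • d k
  have hsplit : ∀ t, ∑ k ∈ Finset.range t, lam k • (u k + d k) = S t + D t := fun t => by
    simp only [S, D, smul_add, Finset.sum_add_distrib]
  have hD : ∀ t ≤ r, ‖D t‖ ≤ ‖S r‖ / 2 := by
    intro t htr
    calc ‖D t‖ ≤ ∑ k ∈ Finset.range t, ‖S r‖ / 4 * (1 / 2) ^ k := by
          refine (norm_sum_le _ _).trans (Finset.sum_le_sum fun k hk => ?_)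
          have hlam : |lam k| * L ≤ 2 * C * ‖S r‖ :=
            (mul_le_mul_of_nonneg_left (huL k) (abs_nonneg _)).trans
              (hu.abs_mul_norm_le lam ((Finset.mem_range.mp hk).trans_le htr))
          calc ‖lam k • d k‖ = |lam k| * ‖d k‖ := norm_smul _ _
            _ ≤ |lam k| * (L / (8 * C) * (1 / 2) ^ k) := by gcongr; exact hd k
            _ = |lam k| * L / (8 * C) * (1 / 2) ^ k := by ring
            _ ≤ 2 * C * ‖S r‖ / (8 * C) * (1 / 2) ^ k := by gcongr
            _ = ‖S r‖ / 4 * (1 / 2) ^ k := by field_simp; ring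
      _ = ‖S r‖ / 4 * ∑ k ∈ Finset.range t, (1 / 2 : ℝ) ^ k := (Finset.mul_sum ..).symm
      _ ≤ ‖S r‖ / 4 * 2 := by gcongr; exact sum_geometric_two_le t
      _ = ‖S r‖ / 2 := by ring
  have hSr : ‖S r‖ ≤ 2 * ‖S r + D r‖ := by
    have := norm_sub_le (S r + D r) (D r)
    rw [add_sub_cancel_right] at this
    linarith [hD r le_rfl]
  rw [hsplit, hsplit]
  calc ‖S s + D s‖ ≤ ‖S s‖ + ‖D s‖ := norm_add_le _ _
    _ ≤ C * ‖S r‖ + ‖S r‖ / 2 := add_le_add (hu s r hsr lam) (hD s hsr)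
    _ = (C + 1 / 2) * ‖S r‖ := by ring
    _ ≤ (C + 1 / 2) * (2 * ‖S r + D r‖) := by gcongr
    _ = (2 * C + 1) * ‖S r + D r‖ := by ring

end IsBasicWithConstant

namespace IsBiorthogonal

variable {h : ℕ → V} {φ : ℕ → StrongDual ℝ V} {C : ℝ}

lemma eventually_sum_smul_eq (hbi : IsBiorthogonal h φ) {v : V} (hv : v ∈ span ℝ (range h)) :
    ∀ᶠ r in atTop, ∑ k ∈ Finset.range r, φ k v • h k = v := by
  induction hv using span_induction with
  | mem x hx =>
    obtain ⟨j, rfl⟩ := hx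
    filter_upwards [eventually_gt_atTop j] with r hr
    simp [hbi _ j, hr]
  | zero => simp
  | add x y _ _ hx hy =>
    filter_upwards [hx, hy] with r hxr hyr
    simp [add_smul, Finset.sum_add_distrib, hxr, hyr]
  | smul a x _ hx =>
    filter_upwards [hx] with r hr
    simp [mul_smul, ← Finset.smul_sum, hr]

lemma norm_sum_smul_le (hbi : IsBiorthogonal h φ) (hC : IsBasicWithConstant h C) {v : V}
    (hv : v ∈ (span ℝ (range h)).topologicalClosure) (s : ℕ) :
    ‖∑ k ∈ Finset.range s, φ k v • h k‖ ≤ C * ‖v‖ := by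
  have hclosed : IsClosed {v : V | ‖∑ k ∈ Finset.range s, φ k v • h k‖ ≤ C * ‖v‖} :=
    isClosed_le (continuous_finsetSum _ fun k _ => (φ k).continuous.smul continuous_const).norm
      (by fun_prop)
  refine closure_minimal (fun v hv => ?_) hclosed hv
  obtain ⟨r, hr, hsr⟩ := ((hbi.eventually_sum_smul_eq hv).and (eventually_ge_atTop s)).exists
  calc ‖∑ k ∈ Finset.range s, φ k v • h k‖ ≤ C * ‖∑ k ∈ Finset.range r, φ k v • h k‖ :=
        hC s r hsr _
    _ = C * ‖v‖ := by rw [hr]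

lemma eq_zero_of_mem_topologicalClosure (hbi : IsBiorthogonal h φ) (hC : IsBasicWithConstant h C)
    {u : V} (hu : u ∈ (span ℝ (range h)).topologicalClosure) (hφu : ∀ j, φ j u = 0) : u = 0 := by
  have key : ∀ w ∈ span ℝ (range h), ‖u‖ ≤ (1 + C) * ‖w - u‖ := by
    intro w hw
    obtain ⟨r, hr⟩ := (hbi.eventually_sum_smul_eq hw).exists
    have hwu : ∑ k ∈ Finset.range r, φ k (w - u) • h k = w := by simpa [hφu] using hr
    have hw' := hbi.norm_sum_smul_le hC (sub_mem (le_topologicalClosure _ hw) hu) r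
    rw [hwu] at hw'
    calc ‖u‖ ≤ ‖w - u‖ + ‖w‖ := by simpa [norm_sub_rev] using norm_sub_le (w - u) w
      _ ≤ (1 + C) * ‖w - u‖ := by linarith
  have hclosed : IsClosed {w : V | ‖u‖ ≤ (1 + C) * ‖w - u‖} :=
    isClosed_le continuous_const (by fun_prop)
  have : ‖u‖ ≤ (1 + C) * ‖u - u‖ := closure_minimal key hclosed hu
  simpa using this

lemma continuum_le_rank [CompleteSpace V] (hbi : IsBiorthogonal h φ) {F : Submodule ℝ V}
    (hF : IsClosed (F : Set V)) (hhF : ∀ j, h j ∈ F) : 𝔠 ≤ Module.rank ℝ F := by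
  set c : ℝ → ℕ → ℝ := fun t j => t ^ j / (1 + ‖h j‖)
  have hsum : ∀ t ∈ Ioo (0 : ℝ) 1, Summable fun j => c t j • h j := by
    intro t ht
    refine Summable.of_norm_bounded (summable_geometric_of_lt_one ht.1.le ht.2) fun j => ?_
    rw [norm_smul, Real.norm_eq_abs, abs_div, abs_pow, abs_of_pos ht.1,
      abs_of_pos (by positivity : 0 < 1 + ‖h j‖), div_mul_eq_mul_div, div_le_iff₀ (by positivity)]
    nlinarith [pow_nonneg ht.1.le j, norm_nonneg (h j)]
  set v : ℝ → V := fun t => ∑' j, c t j • h j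
  have hvF : ∀ t ∈ Ioo (0 : ℝ) 1, v t ∈ F := fun t ht =>
    hF.mem_of_tendsto (hsum t ht).hasSum.tendsto_sum_nat
      (Eventually.of_forall fun n => F.sum_mem fun j _ => F.smul_mem _ (hhF j))
  have hφv : ∀ t ∈ Ioo (0 : ℝ) 1, ∀ i, φ i (v t) = c t i := by
    intro t ht i
    rw [ContinuousLinearMap.map_tsum _ (hsum t ht)]
    simp [hbi i]
  let Λ : V →ₗ[ℝ] ℕ → ℝ := LinearMap.pi fun i => (1 + ‖h i‖) • (φ i : V →ₗ[ℝ] ℝ)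
  let w : Ioo (0 : ℝ) 1 → F := fun t => ⟨v t, hvF t t.2⟩
  have hw : LinearIndependent ℝ w := by
    refine LinearIndependent.of_comp (Λ ∘ₗ F.subtype) ?_
    have hΛ : (Λ ∘ₗ F.subtype) ∘ w = (fun (t : ℝ) (n : ℕ) => t ^ n) ∘ Subtype.val := by
      ext t n
      have : 0 < 1 + ‖h n‖ := by positivity
      simp only [LinearMap.coe_comp, coe_subtype, Function.comp_apply, LinearMap.pi_apply,
        LinearMap.smul_apply, ContinuousLinearMap.coe_coe, hφv t t.2, smul_eq_mul, Λ, w, c]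
      field_simp
    rw [hΛ]
    exact (linearIndependent_fun_pow ℝ).comp _ Subtype.val_injective
  simpa [mk_Ioo_real zero_lt_one] using hw.cardinal_lift_le_rank

end IsBiorthogonal

lemma Submodule.exists_isBiorthogonal_disjoint_topologicalClosure_span {U : Submodule ℝ V}
    (hU : IsClosed (U : Set V)) (hV : ¬ FiniteDimensional ℝ (V ⧸ U)) {y : ℕ → V} {C L : ℝ}
    (hyU : ∀ k, y k ∈ U) (hyC : IsBasicWithConstant y C) (hL : 0 < L) (hyL : ∀ k, L ≤ ‖y k‖) :
    ∃ (h : ℕ → V) (φ : ℕ → StrongDual ℝ V), IsBiorthogonal h φ ∧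
      Disjoint (span ℝ (range h)).topologicalClosure U := by
  have hC : 0 < max C 1 := lt_max_of_lt_right one_pos
  obtain ⟨g, φ, hgφ, hg, hφ⟩ := exists_isBiorthogonal_of_not_finiteDimensional_quotient hU hV
    (δ := fun k => L / (8 * max C 1) * (1 / 2) ^ k) fun k => by positivity
  have hhφ : IsBiorthogonal (fun k => y k + g k) φ := fun i j => by
    simp [hφ i (y j) (hyU j), hgφ i j]
  have hhC := (hyC.mono (le_max_left C 1)).add_of_norm_le hC hyL hg
  exact ⟨_, φ, hhφ, disjoint_def.mpr fun u huG huU =>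
    hhφ.eq_zero_of_mem_topologicalClosure hhC huG fun j => hφ j u huU⟩

end BasicSequence

theorem stmt6_general (V : Type*) [NormedAddCommGroup V] [NormedSpace ℝ V] [CompleteSpace V]
    (W : Submodule ℝ V) (hWclosed : IsClosed (W : Set V))
    (hlin : ∃ E : Submodule ℝ V, Module.rank ℝ E = Cardinal.aleph0 ∧
      (E : Set V) ⊆ (W : Set V)ᶜ ∪ {0})
    (hbasic : ∃ y : ℕ → V, (∀ k, y k ∈ W) ∧ IsBasicSeq y ∧ ∃ L > 0, ∀ k, L ≤ ‖y k‖)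
    (n : ℕ) (Z : Submodule ℝ V) (hZdim : Module.rank ℝ Z = n)
    (hZ : (Z : Set V) \ {0} ⊆ (W : Set V)ᶜ) :
    ∃ F : Submodule ℝ V, IsClosed (F : Set V) ∧ Module.rank ℝ F = Cardinal.continuum ∧
      Z ≤ F ∧ F ⊓ W = ⊥ := by
  obtain ⟨E, hErank, hEW⟩ := hlin
  obtain ⟨y, hyW, ⟨-, C, hyC⟩, L, hL, hyL⟩ := hbasic
  have : FiniteDimensional ℝ Z := Module.rank_lt_aleph0_iff.mp (hZdim ▸ natCast_lt_aleph0)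
  have hE : ¬ FiniteDimensional ℝ E := fun hE => (Module.rank_lt_aleph0_iff.mpr hE).ne hErank
  have hEW : Disjoint E W := disjoint_def.mpr fun x hxE hxW => (hEW hxE).resolve_left (· hxW)
  have hZW : Disjoint Z W :=
    disjoint_def.mpr fun x hxZ hxW => by_contra fun hx => hZ ⟨hxZ, hx⟩ hxW
  have : FiniteDimensional ℝ ↥(E ⊓ (W ⊔ Z)) := finiteDimensional_inf_sup_of_disjoint hEW
  have hV : ¬ FiniteDimensional ℝ (V ⧸ (W ⊔ Z)) := fun _ =>
    hE (finiteDimensional_of_map_mkQ (W ⊔ Z))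
  obtain ⟨h, φ, hhφ, hGW⟩ := exists_isBiorthogonal_disjoint_topologicalClosure_span
    (W.isClosed_sup_finiteDimensional Z hWclosed) hV (fun k => mem_sup_left (hyW k)) hyC hL hyL
  set G := (span ℝ (range h)).topologicalClosure
  have hF : IsClosed ((Z ⊔ G : Submodule ℝ V) : Set V) := by
    rw [sup_comm]
    exact G.isClosed_sup_finiteDimensional Z (isClosed_topologicalClosure _)
  have hsep : IsSeparable ((Z ⊔ G : Submodule ℝ V) : Set V) := by
    refine IsSeparable.mono ?_ (sup_le ((le_topologicalClosure _).trans' le_sup_left)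
      (topologicalClosure_mono le_sup_right) : Z ⊔ G ≤ (Z ⊔ span ℝ (range h)).topologicalClosure)
    rw [topologicalClosure_coe, ← span_eq Z, ← span_union]
    exact ((IsSeparable.of_subtype _).union (countable_range h).isSeparable).span.closure
  refine ⟨Z ⊔ G, hF, le_antisymm ((rank_le_card ℝ _).trans hsep.mk_le_continuum) ?_, le_sup_left,
    disjoint_iff.mp (hZW.symm.disjoint_sup_right_of_disjoint_sup_left hGW.symm).symm⟩
  exact hhφ.continuum_le_rank hF fun j =>
    mem_sup_right (le_topologicalClosure _ (subset_span ⟨j, rfl⟩))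

/-- Theorem 3.6: if `dim V ≥ 𝔠`, `W` is closed, `V \ W` is `ℵ₀`-lineable
and `W` contains a regular basic sequence, then `V \ W` is `(n, 𝔠)`-spaceable for every
`n ∈ ℕ`. -/
theorem stmt6 (V : Type*) [NormedAddCommGroup V] [NormedSpace ℝ V] [CompleteSpace V]
    (hdim : Cardinal.continuum ≤ Module.rank ℝ V)
    (W : Submodule ℝ V) (hWclosed : IsClosed (W : Set V))
    (hlin : ∃ E : Submodule ℝ V, Module.rank ℝ E = Cardinal.aleph0 ∧
      (E : Set V) ⊆ (W : Set V)ᶜ ∪ {0})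
    (hbasic : ∃ y : ℕ → V, (∀ k, y k ∈ W) ∧ IsBasicSeq y ∧ ∃ L > 0, ∀ k, L ≤ ‖y k‖)
    (n : ℕ) (Z : Submodule ℝ V) (hZdim : Module.rank ℝ Z = n)
    (hZ : (Z : Set V) \ {0} ⊆ (W : Set V)ᶜ) :
    ∃ F : Submodule ℝ V, IsClosed (F : Set V) ∧ Module.rank ℝ F = Cardinal.continuum ∧
      Z ≤ F ∧ F ⊓ W = ⊥ :=
  stmt6_general V W hWclosed hlin hbasic n Z hZdim hZ
end

section
/- Let V be a Banach space with dim V ≥ 𝔠 and W a closed subspace containing a regular basic sequence. If V \ W is 𝔠-lineable, then V \ W is pointwise 𝔠-spaceable: for every x ∈ V \ W there is a closed subspace F of V of dimension 𝔠 with x ∈ F and F ∩ W = {0}. -/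
/-!
Normalise the basic sequence `y` in `W` to unit vectors. Since `V \ W` is lineable, Hahn–Banach
against finite-dimensional enlargements of `W' = W ⊔ ℝ ∙ x` yields recursively a biorthogonal system
`(eₙ, ψₙ)` with every `ψₙ` vanishing on `W'`; scale it so that `∑ ‖eₙ‖` is small. Then
`zₙ = yₙ + eₙ` is a small perturbation of a basic sequence, hence basic, with coefficient
functionals `ψₙ`. A vector of the closed span `G` of `(zₙ)` all of whose coefficients vanish is
zero; this gives `G ⊓ W' = ⊥` and an injection of `G` into `ℕ → ℝ`, so `dim G ≤ 𝔠`, while the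
vectors `∑ rᵏ zₖ`, `0 < r < 1`, have independent coefficient sequences `(rᵏ)`, so `dim G ≥ 𝔠`.
Take `F = G ⊔ ℝ ∙ x`.
-/

open Cardinal Set Filter

section LinearAlgebra

universe u v

variable {K : Type*} {M : Type u} [Field K] [AddCommGroup M] [Module K M]

theorem aleph0_le_rank_inf_ker {F : Type v} [AddCommGroup F] [Module K F] [FiniteDimensional K F]
    {E : Submodule K M} (hE : ℵ₀ ≤ Module.rank K E) (f : M →ₗ[K] F) :
    ℵ₀ ≤ Module.rank K ↥(E ⊓ LinearMap.ker f) := by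
  have hnullity := (f ∘ₗ E.subtype).lift_rank_range_add_rank_ker
  have hker : Module.rank K (LinearMap.ker (f ∘ₗ E.subtype)) =
      Module.rank K ↥(E ⊓ LinearMap.ker f) := by
    rw [LinearMap.ker_comp, ← Submodule.map_comap_subtype]
    exact (Submodule.equivMapOfInjective _ E.injective_subtype _).rank_eq
  by_contra! hlt
  have hrange : Module.rank K (LinearMap.range (f ∘ₗ E.subtype)) < ℵ₀ :=
    Module.rank_lt_aleph0 _ _
  have := Cardinal.add_lt_aleph0 (Cardinal.lift_lt_aleph0.{v, u}.mpr hrange)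
    (Cardinal.lift_lt_aleph0.{u, v}.mpr (hker ▸ hlt))
  rw [hnullity, Cardinal.lift_lt_aleph0] at this
  exact this.not_ge hE

theorem Submodule.rank_le_of_le_sup_of_disjoint {P W U : Submodule K M} (hPU : P ≤ W ⊔ U)
    (hPW : Disjoint P W) : Module.rank K P ≤ Module.rank K U := by
  have hinj : Function.Injective (W.mkQ ∘ₗ P.subtype) := by
    rw [← LinearMap.ker_eq_bot, LinearMap.ker_comp, Submodule.ker_mkQ, eq_bot_iff]
    rintro ⟨v, hv⟩ hvW
    simpa using (Submodule.disjoint_def.mp hPW) v hv hvW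
  calc Module.rank K P = Module.rank K (LinearMap.range (W.mkQ ∘ₗ P.subtype)) :=
        (LinearEquiv.ofInjective _ hinj).rank_eq
    _ ≤ Module.rank K (U.map W.mkQ) := by
        refine Submodule.rank_mono ?_
        rw [LinearMap.range_comp, Submodule.range_subtype]
        calc P.map W.mkQ ≤ (W ⊔ U).map W.mkQ := Submodule.map_mono hPU
          _ = U.map W.mkQ := by simp [Submodule.map_sup]
    _ ≤ Module.rank K U := rank_map_le _ _

theorem Submodule.rank_sup_span_singleton {P : Submodule K M} (hP : ℵ₀ ≤ Module.rank K P)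
    (x : M) : Module.rank K ↥(P ⊔ K ∙ x) = Module.rank K P := by
  refine le_antisymm ?_ (Submodule.rank_mono le_sup_left)
  calc Module.rank K ↥(P ⊔ K ∙ x) ≤ Module.rank K P + Module.rank K (K ∙ x) :=
        Submodule.rank_add_le_rank_add_rank _ _
    _ ≤ Module.rank K P + 1 := by gcongr; simpa using rank_span_le (R := K) {x}
    _ = Module.rank K P := Cardinal.add_one_eq hP

theorem Submodule.disjoint_sup_span_singleton {P W : Submodule K M} {x : M}
    (hPW : Disjoint P (W ⊔ K ∙ x)) (hx : x ∉ W) : Disjoint (P ⊔ K ∙ x) W := by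
  rw [Submodule.disjoint_def]
  intro v hv hvW
  obtain ⟨t, ht, _, hs, rfl⟩ := Submodule.mem_sup.mp hv
  obtain ⟨a, rfl⟩ := Submodule.mem_span_singleton.mp hs
  have ht0 : t = 0 := Submodule.disjoint_def.mp hPW t ht <| by
    simpa using Submodule.sub_mem _ (Submodule.mem_sup_left hvW : t + a • x ∈ W ⊔ K ∙ x)
      (Submodule.mem_sup_right (Submodule.smul_mem _ a (Submodule.mem_span_singleton_self x)))
  subst ht0
  rw [zero_add] at hvW ⊢
  by_contra ha
  exact hx ((Submodule.smul_mem_iff _ (smul_ne_zero_iff.mp ha).1).mp hvW)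

theorem Submodule.disjoint_inf_ker_sup_span_singleton {E W : Submodule K M} (hEW : Disjoint E W)
    {g : M →ₗ[K] K} (hgW : ∀ w ∈ W, g w = 0) {x : M} (hgx : g x ≠ 0) :
    Disjoint (E ⊓ LinearMap.ker g) (W ⊔ K ∙ x) := by
  rw [Submodule.disjoint_def]
  rintro v ⟨hvE, hvg⟩ hv
  obtain ⟨w, hw, _, hs, rfl⟩ := Submodule.mem_sup.mp hv
  obtain ⟨a, rfl⟩ := Submodule.mem_span_singleton.mp hs
  obtain rfl : a = 0 := by simpa [hgW w hw, hgx] using hvg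
  rw [zero_smul, add_zero] at hvE ⊢
  exact Submodule.disjoint_def.mp hEW w hvE hw

end LinearAlgebra

theorem linearIndependent_geometric (L : Type*) [CommRing L] [IsDomain L] :
    LinearIndependent L fun r : L => fun n : ℕ => r ^ n := by
  -- Dedekind: the sequences `n ↦ rⁿ` are distinct characters of `Multiplicative ℕ`.
  have h := (linearIndependent_monoidHom (Multiplicative ℕ) L).comp (powersHom L)
    (powersHom L).injective
  have := h.map' (LinearMap.funLeft L L Multiplicative.ofAdd)
    (LinearMap.ker_eq_bot.mpr
      (LinearMap.funLeft_injective_of_surjective _ _ _ Multiplicative.ofAdd.surjective))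
  have hpow : (fun r : L => fun n : ℕ => r ^ n) = LinearMap.funLeft L L Multiplicative.ofAdd ∘
      (fun f : Multiplicative ℕ →* L => ⇑f) ∘ powersHom L := by
    ext r n
    simp
  exact hpow ▸ this

theorem rank_le_continuum_of_injective {M : Type*} [AddCommGroup M] [Module ℝ M]
    (f : M →ₗ[ℝ] ℕ → ℝ) (hf : Function.Injective f) : Module.rank ℝ M ≤ 𝔠 := by
  have h := (f.lift_rank_le_of_injective hf).trans
    (Cardinal.lift_le.mpr (rank_le_card ℝ (ℕ → ℝ)))
  rwa [← Cardinal.power_def ℝ ℕ, Cardinal.mk_real, Cardinal.mk_nat,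
    Cardinal.continuum_power_aleph0, Cardinal.lift_continuum, Cardinal.lift_le_continuum] at h

section BasisConstant

variable {V : Type*} [NormedAddCommGroup V] [NormedSpace ℝ V]

def HasBasisConstant (u : ℕ → V) (C : ℝ) : Prop :=
  ∀ s r : ℕ, s ≤ r → ∀ lam : ℕ → ℝ,
    ‖∑ k ∈ Finset.range s, lam k • u k‖ ≤ C * ‖∑ k ∈ Finset.range r, lam k • u k‖

namespace HasBasisConstant

variable {u e : ℕ → V} {C : ℝ}

theorem smul (hu : HasBasisConstant u C) (c : ℕ → ℝ) :
    HasBasisConstant (fun k => c k • u k) C := fun s r hsr lam => by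
  simpa only [smul_smul] using hu s r hsr fun k => lam k * c k

theorem one_le (hu : HasBasisConstant u C) (h0 : u 0 ≠ 0) : 1 ≤ C := by
  have h := hu 1 1 le_rfl fun _ => 1
  simp only [Finset.sum_range_one, one_smul] at h
  exact le_of_mul_le_mul_right (by rwa [one_mul]) (norm_pos_iff.mpr h0)

theorem norm_smul_le (hu : HasBasisConstant u C) (lam : ℕ → ℝ) {k r : ℕ} (hk : k < r) :
    ‖lam k • u k‖ ≤ 2 * C * ‖∑ j ∈ Finset.range r, lam j • u j‖ := by
  have hsucc := hu (k + 1) r hk lam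
  have hprev := hu k r hk.le lam
  rw [Finset.sum_range_succ] at hsucc
  calc ‖lam k • u k‖
      = ‖(∑ j ∈ Finset.range k, lam j • u j + lam k • u k) -
          ∑ j ∈ Finset.range k, lam j • u j‖ := by rw [add_sub_cancel_left]
    _ ≤ _ := norm_sub_le _ _
    _ ≤ _ := by linarith

theorem add (hu : HasBasisConstant u C) (hunit : ∀ k, ‖u k‖ = 1)
    (he : ∀ n, ∑ k ∈ Finset.range n, ‖e k‖ ≤ (4 * C)⁻¹) :
    HasBasisConstant (u + e) (2 * C + 1) := by
  have hC : 0 < C := one_pos.trans_le (hu.one_le (norm_ne_zero_iff.mp (by simp [hunit])))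
  intro s r hsr lam
  set S := ‖∑ k ∈ Finset.range r, lam k • u k‖
  have hsmall : ∀ t ≤ r, ‖∑ k ∈ Finset.range t, lam k • e k‖ ≤ S / 2 := fun t ht =>
    calc ‖∑ k ∈ Finset.range t, lam k • e k‖
        ≤ ∑ k ∈ Finset.range t, ‖lam k • e k‖ := norm_sum_le _ _
      _ ≤ ∑ k ∈ Finset.range t, 2 * C * S * ‖e k‖ := Finset.sum_le_sum fun k hk => by
          rw [norm_smul]
          gcongr
          simpa [norm_smul, hunit] using
            hu.norm_smul_le lam ((Finset.mem_range.mp hk).trans_le ht)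
      _ = 2 * C * S * ∑ k ∈ Finset.range t, ‖e k‖ := (Finset.mul_sum _ _ _).symm
      _ ≤ 2 * C * S * (4 * C)⁻¹ := by gcongr; exact he t
      _ = S / 2 := by field_simp; ring
  have hsplit : ∀ t, ∑ k ∈ Finset.range t, lam k • (u + e) k =
      ∑ k ∈ Finset.range t, lam k • u k + ∑ k ∈ Finset.range t, lam k • e k := fun t => by
    simp only [Pi.add_apply, smul_add, Finset.sum_add_distrib]
  rw [hsplit, hsplit]
  set T := ∑ k ∈ Finset.range r, lam k • e k
  have hS : S ≤ 2 * ‖∑ k ∈ Finset.range r, lam k • u k + T‖ := by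
    have := norm_sub_le (∑ k ∈ Finset.range r, lam k • u k + T) T
    rw [add_sub_cancel_right] at this
    linarith [hsmall r le_rfl]
  have := mul_le_mul_of_nonneg_left hS (by positivity : 0 ≤ C + 1 / 2)
  calc _ ≤ ‖∑ k ∈ Finset.range s, lam k • u k‖ + ‖∑ k ∈ Finset.range s, lam k • e k‖ :=
        norm_add_le _ _
    _ ≤ C * S + S / 2 := add_le_add (hu s r hsr lam) (hsmall s hsr)
    _ ≤ _ := by linarith

end HasBasisConstant

end BasisConstant

section Biorthogonal

variable {V : Type*} [NormedAddCommGroup V] [NormedSpace ℝ V]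

def Biorthogonal (z : ℕ → V) (ψ : ℕ → StrongDual ℝ V) : Prop :=
  ∀ n m, ψ n (z m) = if n = m then 1 else 0

def partialSum (z : ℕ → V) (ψ : ℕ → StrongDual ℝ V) (N : ℕ) : V →L[ℝ] V :=
  ∑ k ∈ Finset.range N, (ψ k).smulRight (z k)

variable {z : ℕ → V} {ψ : ℕ → StrongDual ℝ V} {K : ℝ}

theorem partialSum_apply (N : ℕ) (v : V) :
    partialSum z ψ N v = ∑ k ∈ Finset.range N, ψ k v • z k := by
  simp [partialSum]

namespace Biorthogonal

theorem smul (h : Biorthogonal z ψ) {c : ℕ → ℝ} (hc : ∀ k, c k ≠ 0) :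
    Biorthogonal (fun k => c k • z k) (fun k => (c k)⁻¹ • ψ k) := fun n m => by
  simp only [smul_apply, map_smul, h n m, smul_eq_mul]
  split_ifs with hnm
  · subst hnm; field_simp [hc n]
  · simp

theorem ne_zero (h : Biorthogonal z ψ) (k : ℕ) : z k ≠ 0 := fun h0 => by
  simpa [h0] using h k k

theorem partialSum_apply_of_lt (h : Biorthogonal z ψ) {m N : ℕ} (hm : m < N) :
    partialSum z ψ N (z m) = z m := by
  rw [partialSum_apply, Finset.sum_eq_single m (fun k _ hk => by simp [h k m, hk])
    (fun hm' => absurd (Finset.mem_range.mpr hm) hm')]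
  simp [h m m]

theorem exists_partialSum_eq (h : Biorthogonal z ψ) {w : V}
    (hw : w ∈ Submodule.span ℝ (range z)) : ∃ M, ∀ N, M ≤ N → partialSum z ψ N w = w := by
  induction hw using Submodule.span_induction with
  | mem _ hx =>
    obtain ⟨m, rfl⟩ := hx
    exact ⟨m + 1, fun N hN => h.partialSum_apply_of_lt hN⟩
  | zero => exact ⟨0, fun N _ => map_zero _⟩
  | add _ _ _ _ hx hy =>
    obtain ⟨M₁, h₁⟩ := hx
    obtain ⟨M₂, h₂⟩ := hy
    exact ⟨max M₁ M₂, fun N hN => by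
      rw [map_add, h₁ N (le_of_max_le_left hN), h₂ N (le_of_max_le_right hN)]⟩
  | smul a _ _ hx =>
    obtain ⟨M, hM⟩ := hx
    exact ⟨M, fun N hN => by rw [map_smul, hM N hN]⟩

theorem norm_partialSum_le (h : Biorthogonal z ψ) (hz : HasBasisConstant z K) {w : V}
    (hw : w ∈ (Submodule.span ℝ (range z)).topologicalClosure) (N : ℕ) :
    ‖partialSum z ψ N w‖ ≤ K * ‖w‖ := by
  have hspan : (Submodule.span ℝ (range z) : Set V) ⊆
      {v | ‖partialSum z ψ N v‖ ≤ K * ‖v‖} := fun v hv => by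
    obtain ⟨M, hM⟩ := h.exists_partialSum_eq hv
    change ‖partialSum z ψ N v‖ ≤ K * ‖v‖
    conv_rhs => rw [← hM (max N M) (le_max_right _ _)]
    simpa only [partialSum_apply] using hz N (max N M) (le_max_left _ _) fun k => ψ k v
  rw [← SetLike.mem_coe, Submodule.topologicalClosure_coe] at hw
  exact closure_minimal hspan (isClosed_le (by fun_prop) (by fun_prop)) hw

theorem eq_zero_of_forall_apply_eq_zero (h : Biorthogonal z ψ) (hz : HasBasisConstant z K)
    {v : V} (hv : v ∈ (Submodule.span ℝ (range z)).topologicalClosure)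
    (hψv : ∀ k, ψ k v = 0) : v = 0 := by
  have hspan : (Submodule.span ℝ (range z) : Set V) ⊆ {w | ‖v‖ ≤ (1 + K) * ‖v - w‖} :=
    fun w hw => by
    obtain ⟨M, hM⟩ := h.exists_partialSum_eq hw
    have hwv : w - v ∈ (Submodule.span ℝ (range z)).topologicalClosure :=
      Submodule.sub_mem _ (Submodule.le_topologicalClosure _ hw) hv
    have hPv : partialSum z ψ M v = 0 := by simp [partialSum_apply, hψv]
    calc ‖v‖ ≤ ‖v - w‖ + ‖w‖ := norm_le_norm_sub_add v w
      _ = ‖v - w‖ + ‖partialSum z ψ M (w - v)‖ := by rw [map_sub, hM M le_rfl, hPv, sub_zero]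
      _ ≤ ‖v - w‖ + K * ‖w - v‖ := add_le_add_right (h.norm_partialSum_le hz hwv M) _
      _ = (1 + K) * ‖v - w‖ := by rw [norm_sub_rev]; ring
  rw [← SetLike.mem_coe, Submodule.topologicalClosure_coe] at hv
  simpa using closure_minimal hspan (isClosed_le continuous_const (by fun_prop)) hv

theorem continuum_le_rank [CompleteSpace V] (h : Biorthogonal z ψ) {B : ℝ}
    (hz : ∀ k, ‖z k‖ ≤ B) {G : Submodule ℝ V} (hG : IsClosed (G : Set V))
    (hzG : ∀ k, z k ∈ G) : 𝔠 ≤ Module.rank ℝ G := by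
  have hsum : ∀ r ∈ Ioo (0 : ℝ) 1, Summable fun k => r ^ k • z k := fun r hr =>
    Summable.of_norm_bounded ((summable_geometric_of_lt_one hr.1.le hr.2).mul_right B)
      fun k => by
        rw [norm_smul, norm_pow, Real.norm_of_nonneg hr.1.le]
        exact mul_le_mul_of_nonneg_left (hz k) (pow_nonneg hr.1.le k)
  have hmem : ∀ r ∈ Ioo (0 : ℝ) 1, ∑' k, r ^ k • z k ∈ G := fun r hr =>
    hG.mem_of_tendsto (hsum r hr).hasSum.tendsto_sum_nat
      (Eventually.of_forall fun n => G.sum_mem fun k _ => G.smul_mem _ (hzG k))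
  have hcoeff : ∀ r ∈ Ioo (0 : ℝ) 1, ∀ j, ψ j (∑' k, r ^ k • z k) = r ^ j := fun r hr j => by
    simp [(ψ j).map_tsum (hsum r hr), h j]
  let Ψ : G →ₗ[ℝ] ℕ → ℝ := LinearMap.pi fun j => (ψ j).toLinearMap ∘ₗ G.subtype
  let v : Ioo (0 : ℝ) 1 → G := fun r => ⟨∑' k, r.1 ^ k • z k, hmem r r.2⟩
  have hΨv : Ψ ∘ v = (fun r : ℝ => fun n : ℕ => r ^ n) ∘ Subtype.val := by
    ext r j
    simp [Ψ, v, hcoeff r r.2]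
  have hv : LinearIndependent ℝ v := LinearIndependent.of_comp Ψ (by
    rw [hΨv]
    exact (linearIndependent_geometric ℝ).comp Subtype.val Subtype.val_injective)
  simpa [mk_Ioo_real] using hv.cardinal_lift_le_rank

end Biorthogonal

end Biorthogonal

section Construction

variable {V : Type*} [NormedAddCommGroup V] [NormedSpace ℝ V]

theorem exists_dual_eq_one_of_notMem {M : Submodule ℝ V} (hM : IsClosed (M : Set V)) {b : V}
    (hb : b ∉ M) : ∃ f : StrongDual ℝ V, f b = 1 ∧ ∀ w ∈ M, f w = 0 := by
  obtain ⟨f, u, hfM, hfb⟩ := geometric_hahn_banach_closed_point M.convex hM hb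
  have hu : 0 < u := by simpa using hfM 0 M.zero_mem
  -- `f` is bounded above on the subspace `M`, so it vanishes there
  have hf0 : ∀ w ∈ M, f w = 0 := fun w hw => by
    by_contra h
    have := hfM ((u / f w) • w) (M.smul_mem _ hw)
    rw [map_smul, smul_eq_mul, div_mul_cancel₀ _ h] at this
    exact lt_irrefl _ this
  have hfb0 : f b ≠ 0 := (hu.trans hfb).ne'
  exact ⟨(f b)⁻¹ • f, by simp [hfb0], fun w hw => by simp [hf0 w hw]⟩

variable {W E : Submodule ℝ V}

theorem exists_biorthogonal_extension (hW : IsClosed (W : Set V))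
    (hE : ℵ₀ ≤ Module.rank ℝ E) (hEW : Disjoint E W) (s : Finset (V × StrongDual ℝ V)) :
    ∃ q : V × StrongDual ℝ V, (q.2 q.1 = 1 ∧ ∀ w ∈ W, q.2 w = 0) ∧
      ∀ p ∈ s, p.2 q.1 = 0 ∧ q.2 p.1 = 0 := by
  let Φ : V →ₗ[ℝ] s → ℝ := LinearMap.pi fun p => (p.1.2 : V →ₗ[ℝ] ℝ)
  let U := Submodule.span ℝ (Prod.fst '' (s : Set (V × StrongDual ℝ V)))
  have : FiniteDimensional ℝ U := FiniteDimensional.span_of_finite ℝ (s.finite_toSet.image _)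
  obtain ⟨b, hbK, hbWU⟩ : ∃ b ∈ E ⊓ LinearMap.ker Φ, b ∉ W ⊔ U := by
    by_contra! hle
    have := Submodule.rank_le_of_le_sup_of_disjoint hle (hEW.mono_left inf_le_left)
    exact ((aleph0_le_rank_inf_ker hE Φ).trans this).not_gt (Module.rank_lt_aleph0 ℝ U)
  obtain ⟨f, hfb, hf⟩ :=
    exists_dual_eq_one_of_notMem (W.isClosed_sup_finiteDimensional U hW) hbWU
  refine ⟨(b, f), ⟨hfb, fun w hw => hf w (Submodule.mem_sup_left hw)⟩, fun p hp =>
    ⟨?_, hf _ (Submodule.mem_sup_right (Submodule.subset_span ⟨p, hp, rfl⟩))⟩⟩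
  simpa [Φ] using congrFun (LinearMap.mem_ker.mp hbK.2) ⟨p, hp⟩

theorem exists_biorthogonal (hW : IsClosed (W : Set V)) (hE : ℵ₀ ≤ Module.rank ℝ E)
    (hEW : Disjoint E W) {ε : ℕ → ℝ} (hε : ∀ k, 0 < ε k) :
    ∃ (e : ℕ → V) (ψ : ℕ → StrongDual ℝ V), Biorthogonal e ψ ∧ (∀ k, ‖e k‖ = ε k) ∧
      ∀ n, ∀ w ∈ W, ψ n w = 0 := by
  obtain ⟨q, hq, hqq⟩ := exists_seq_of_forall_finset_exists
    (fun q : V × StrongDual ℝ V => q.2 q.1 = 1 ∧ ∀ w ∈ W, q.2 w = 0)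
    (fun p q => p.2 q.1 = 0 ∧ q.2 p.1 = 0) fun s _ => exists_biorthogonal_extension hW hE hEW s
  have hbi : Biorthogonal (fun k => (q k).1) (fun k => (q k).2) := fun n m => by
    rcases lt_trichotomy n m with h | rfl | h
    · simp [(hqq n m h).1, h.ne]
    · simp [(hq n).1]
    · simp [(hqq m n h).2, h.ne']
  have hc : ∀ k, ε k / ‖(q k).1‖ ≠ 0 := fun k =>
    div_ne_zero (hε k).ne' (norm_ne_zero_iff.mpr (hbi.ne_zero k))
  refine ⟨_, _, hbi.smul hc, fun k => ?_, fun n w hw => by simp [(hq n).2 w hw]⟩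
  simp [norm_smul, abs_of_pos (hε k), hbi.ne_zero k]

theorem exists_biorthogonal_hasBasisConstant (hW : IsClosed (W : Set V)) {y : ℕ → V}
    (hyW : ∀ k, y k ∈ W) (hy : IsBasicSeq y) (hE : ℵ₀ ≤ Module.rank ℝ E) (hEW : Disjoint E W) :
    ∃ (z : ℕ → V) (ψ : ℕ → StrongDual ℝ V) (K : ℝ), Biorthogonal z ψ ∧ HasBasisConstant z K ∧
      (∀ k, ‖z k‖ ≤ 2) ∧ ∀ n, ∀ w ∈ W, ψ n w = 0 := by
  obtain ⟨hy0, C, hC⟩ := hy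
  set u : ℕ → V := fun k => ‖y k‖⁻¹ • y k
  have hunit : ∀ k, ‖u k‖ = 1 := fun k => norm_smul_inv_norm (hy0 k)
  have hu : HasBasisConstant u C := HasBasisConstant.smul hC _
  have hC1 : 1 ≤ C := hu.one_le (norm_ne_zero_iff.mp (by simp [hunit]))
  obtain ⟨e, ψ, hbi, he, hψW⟩ :=
    exists_biorthogonal hW hE hEW (ε := fun k => (8 * C)⁻¹ * (1 / 2) ^ k) fun k => by positivity
  have hesum : ∀ n, ∑ k ∈ Finset.range n, ‖e k‖ ≤ (4 * C)⁻¹ := fun n => by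
    simp_rw [he, ← Finset.mul_sum]
    calc (8 * C)⁻¹ * ∑ k ∈ Finset.range n, (1 / 2 : ℝ) ^ k ≤ (8 * C)⁻¹ * 2 := by
          gcongr; exact sum_geometric_two_le n
      _ = (4 * C)⁻¹ := by field_simp; norm_num
  refine ⟨u + e, ψ, 2 * C + 1, fun n m => ?_, hu.add hunit hesum, fun k => ?_, hψW⟩
  · rw [Pi.add_apply, map_add, hψW n _ (W.smul_mem _ (hyW m)), zero_add]
    exact hbi n m
  · have : ‖e k‖ ≤ 1 := by
      rw [he]
      exact mul_le_one₀ (inv_le_one_of_one_le₀ (by linarith)) (by positivity)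
        (pow_le_one₀ (by norm_num) (by norm_num))
    rw [Pi.add_apply]
    linarith [norm_add_le (u k) (e k), hunit k]

theorem exists_isClosed_rank_eq_continuum_disjoint [CompleteSpace V]
    (hW : IsClosed (W : Set V)) {y : ℕ → V} (hyW : ∀ k, y k ∈ W) (hy : IsBasicSeq y)
    (hE : ℵ₀ ≤ Module.rank ℝ E) (hEW : Disjoint E W) :
    ∃ G : Submodule ℝ V, IsClosed (G : Set V) ∧ Module.rank ℝ G = 𝔠 ∧ Disjoint G W := by
  obtain ⟨z, ψ, K, hbi, hz, hzB, hψW⟩ := exists_biorthogonal_hasBasisConstant hW hyW hy hE hEW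
  set G := (Submodule.span ℝ (range z)).topologicalClosure
  have hG : IsClosed (G : Set V) := Submodule.isClosed_topologicalClosure _
  have hzG : ∀ k, z k ∈ G := fun k =>
    Submodule.le_topologicalClosure _ (Submodule.subset_span (mem_range_self k))
  have hcoeff : ∀ v ∈ G, (∀ k, ψ k v = 0) → v = 0 := fun v hv =>
    hbi.eq_zero_of_forall_apply_eq_zero hz hv
  refine ⟨G, hG, le_antisymm ?_ (hbi.continuum_le_rank hzB hG hzG), ?_⟩
  · refine rank_le_continuum_of_injective (LinearMap.pi fun k => (ψ k : V →ₗ[ℝ] ℝ) ∘ₗ G.subtype)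
      ((injective_iff_map_eq_zero _).mpr ?_)
    rintro ⟨v, hv⟩ h0
    exact Subtype.ext (hcoeff v hv fun k => congrFun h0 k)
  · exact Submodule.disjoint_def.mpr fun v hv hvW => hcoeff v hv fun k => hψW k v hvW

end Construction

theorem stmt10_general (V : Type*) [NormedAddCommGroup V] [NormedSpace ℝ V] [CompleteSpace V]
    (W : Submodule ℝ V) (hWclosed : IsClosed (W : Set V))
    (hbasic : ∃ y : ℕ → V, (∀ k, y k ∈ W) ∧ IsBasicSeq y ∧ ∃ L > 0, ∀ k, L ≤ ‖y k‖)
    (hlin : ∃ E : Submodule ℝ V, Module.rank ℝ E = Cardinal.continuum ∧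
      (E : Set V) ⊆ (W : Set V)ᶜ ∪ {0})
    (x : V) (hx : x ∉ W) :
    ∃ F : Submodule ℝ V, IsClosed (F : Set V) ∧ Module.rank ℝ F = Cardinal.continuum ∧
      x ∈ F ∧ F ⊓ W = ⊥ := by
  obtain ⟨y, hyW, hy, -⟩ := hbasic
  obtain ⟨E, hErank, hEsub⟩ := hlin
  have hEW : Disjoint E W := Submodule.disjoint_def.mpr fun v hvE hvW =>
    (hEsub hvE).resolve_left (not_not_intro hvW)
  obtain ⟨g, hgx, hgW⟩ := exists_dual_eq_one_of_notMem hWclosed hx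
  obtain ⟨G, hG, hGrank, hGW⟩ := exists_isClosed_rank_eq_continuum_disjoint
    (W.isClosed_sup_finiteDimensional (ℝ ∙ x) hWclosed)
    (fun k => Submodule.mem_sup_left (hyW k)) hy
    (aleph0_le_rank_inf_ker (hErank ▸ aleph0_le_continuum) (g : V →ₗ[ℝ] ℝ))
    (Submodule.disjoint_inf_ker_sup_span_singleton hEW hgW (by simp [hgx]))
  refine ⟨G ⊔ ℝ ∙ x, G.isClosed_sup_finiteDimensional _ hG, ?_,
    Submodule.mem_sup_right (Submodule.mem_span_singleton_self x),
    (Submodule.disjoint_sup_span_singleton hGW hx).eq_bot⟩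
  rw [Submodule.rank_sup_span_singleton (hGrank ▸ aleph0_le_continuum), hGrank]

/-- if `dim V ≥ 𝔠`, `W` is a closed subspace containing a regular basic
sequence, and `V \ W` is `𝔠`-lineable, then `V \ W` is pointwise `𝔠`-spaceable. -/
theorem stmt10 (V : Type*) [NormedAddCommGroup V] [NormedSpace ℝ V] [CompleteSpace V]
    (hdim : Cardinal.continuum ≤ Module.rank ℝ V)
    (W : Submodule ℝ V) (hWclosed : IsClosed (W : Set V))
    (hbasic : ∃ y : ℕ → V, (∀ k, y k ∈ W) ∧ IsBasicSeq y ∧ ∃ L > 0, ∀ k, L ≤ ‖y k‖)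
    (hlin : ∃ E : Submodule ℝ V, Module.rank ℝ E = Cardinal.continuum ∧
      (E : Set V) ⊆ (W : Set V)ᶜ ∪ {0})
    (x : V) (hx : x ∉ W) :
    ∃ F : Submodule ℝ V, IsClosed (F : Set V) ∧ Module.rank ℝ F = Cardinal.continuum ∧
      x ∈ F ∧ F ⊓ W = ⊥ :=
  stmt10_general V W hWclosed hbasic hlin x hx
end
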